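/- (Key step in the proof of Theorem 3.1: the Picard sequence is Cauchy.) Let Z be a nonempty set, G a multiplicative G_M-metric on Z, F : Z → Z, x₀ ∈ Z, η ∈ [0,1) and γ > 0. Assume G(Fx, Fy, Fz) ≤ G(x,y,z)^η for all x, y, z in the closed ball B̄(x₀, γ), and G(x₀, Fx₀, Fx₀) ≤ γ^{1−η}. Then the Picard sequence x_j = F^j x₀ is a multiplicative G_M-Cauchy sequence. -/

import Mathlib

structure IsMultGMetric {Z : Type*} (G : Z → Z → Z → ℝ) : Prop where
  pos : ∀ x y z, 0 < G x y z
  eq_one : ∀ x y z, x = y → y = z → G x y z = 1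
  one_lt : ∀ x y, x ≠ y → 1 < G x x y
  le_of_ne : ∀ x y z, y ≠ z → G x x y ≤ G x y z
  perm : ∀ x y z, G x y z = G y z x
  swap : ∀ x y z, G x y z = G x z y
  rect : ∀ x y z t, G x y z ≤ G x t t * G t y z

def GMCauchy {Z : Type*} (G : Z → Z → Z → ℝ) (x : ℕ → Z) : Prop :=
  ∀ ε : ℝ, 1 < ε → ∃ N : ℕ, ∀ n ≥ N, ∀ m ≥ N, ∀ l ≥ N, G (x n) (x m) (x l) < ε

def GMBall {Z : Type*} (G : Z → Z → Z → ℝ) (x₀ : Z) (γ : ℝ) : Set Z :=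
  {ρ | G x₀ ρ ρ ≤ γ}

/-!
With `δ = G(x₀, Fx₀, Fx₀) ≥ 1`, the contraction gives `G(xⱼ, xⱼ₊₁, xⱼ₊₁) ≤ δ^(ηʲ)` as long as the
iterates stay in the ball, and the rectangular inequality chains these steps into
`G(xₙ, xₘ, xₘ) ≤ δ^(ηⁿ + ⋯ + ηᵐ⁻¹) ≤ δ^(ηⁿ/(1-η))`. For `n = 0` this is at most
`δ^(1/(1-η)) ≤ γ` by the hypothesis on `x₀`, so an induction keeps every iterate in the ball.
Finally `G(a, b, c) ≤ (G(t, a, a) G(t, b, b) G(t, c, c))²` with `t = x_N` turns the bound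
`δ^(η^N/(1-η)) → 1` into the Cauchy property.
-/

open Finset Filter Topology

namespace IsMultGMetric

variable {Z : Type*} {G : Z → Z → Z → ℝ}

theorem one_le (hG : IsMultGMetric G) (x y z : Z) : 1 ≤ G x y z := by
  by_cases hyz : y = z
  · subst hyz
    rcases eq_or_ne x y with rfl | hxy
    · exact (hG.eq_one x x x rfl rfl).ge
    · rw [hG.perm x y y]
      exact (hG.one_lt y x hxy.symm).le
  · refine le_trans ?_ (hG.le_of_ne x y z hyz)
    rcases eq_or_ne x y with rfl | hxy
    · exact (hG.eq_one x x x rfl rfl).ge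
    · exact (hG.one_lt x y hxy).le

theorem le_sq_swap (hG : IsMultGMetric G) (x y : Z) : G x y y ≤ G y x x ^ 2 :=
  calc G x y y = G y y x := hG.perm x y y
    _ ≤ G y x x * G x y x := hG.rect y y x x
    _ = G y x x ^ 2 := by rw [hG.perm x y x, sq]

theorem le_mul_mul (hG : IsMultGMetric G) (x y z t : Z) :
    G x y z ≤ G x t t * G y t t * G z t t :=
  calc G x y z ≤ G x t t * G t y z := hG.rect x y z t
    _ = G x t t * G y z t := by rw [hG.perm t y z]
    _ ≤ G x t t * (G y t t * G t z t) :=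
        mul_le_mul_of_nonneg_left (hG.rect y z t t) (hG.pos x t t).le
    _ = G x t t * G y t t * G z t t := by rw [hG.perm t z t, mul_assoc]

theorem le_sq_of_center (hG : IsMultGMetric G) (x y z t : Z) :
    G x y z ≤ (G t x x * G t y y * G t z z) ^ 2 := by
  have hpos (a b c : Z) : 0 ≤ G a b c := (hG.pos a b c).le
  calc G x y z ≤ G x t t * G y t t * G z t t := hG.le_mul_mul x y z t
    _ ≤ G t x x ^ 2 * G t y y ^ 2 * G t z z ^ 2 :=
        mul_le_mul (mul_le_mul (hG.le_sq_swap x t) (hG.le_sq_swap y t) (hpos ..) (sq_nonneg _))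
          (hG.le_sq_swap z t) (hpos ..) (by positivity)
    _ = (G t x x * G t y y * G t z z) ^ 2 := by ring

theorem le_prod_Ico (hG : IsMultGMetric G) {x : ℕ → Z} {c : ℕ → ℝ} {n m : ℕ} (hnm : n ≤ m)
    (hc : ∀ i ∈ Ico n m, G (x i) (x (i + 1)) (x (i + 1)) ≤ c i) :
    G (x n) (x m) (x m) ≤ ∏ i ∈ Ico n m, c i := by
  induction m, hnm using Nat.le_induction with
  | base => simp [hG.eq_one]
  | succ m hnm ih =>
    have ih := ih fun i hi => hc i (Ico_subset_Ico_right m.le_succ hi)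
    rw [prod_Ico_succ_top hnm]
    calc G (x n) (x (m + 1)) (x (m + 1))
        ≤ G (x n) (x m) (x m) * G (x m) (x (m + 1)) (x (m + 1)) := hG.rect ..
      _ ≤ (∏ i ∈ Ico n m, c i) * c m :=
          mul_le_mul ih (hc m (by simp [hnm])) (hG.pos ..).le ((hG.pos ..).le.trans ih)

theorem le_rpow_of_geometric_steps (hG : IsMultGMetric G) {x : ℕ → Z} {δ η : ℝ} (hδ : 1 ≤ δ)
    (hη0 : 0 ≤ η) (hη1 : η < 1) {n m : ℕ} (hnm : n ≤ m)
    (hsteps : ∀ i ∈ Ico n m, G (x i) (x (i + 1)) (x (i + 1)) ≤ δ ^ η ^ i) :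
    G (x n) (x m) (x m) ≤ δ ^ (η ^ n / (1 - η)) :=
  calc G (x n) (x m) (x m) ≤ ∏ i ∈ Ico n m, δ ^ η ^ i := hG.le_prod_Ico hnm hsteps
    _ = δ ^ ∑ i ∈ Ico n m, η ^ i := (Real.rpow_sum_of_pos (by linarith) _ _).symm
    _ ≤ δ ^ (η ^ n / (1 - η)) :=
        Real.rpow_le_rpow_of_exponent_le hδ (geom_sum_Ico_le_of_lt_one hη0 hη1)

theorem gmCauchy_of_tendsto (hG : IsMultGMetric G) {x : ℕ → Z} {b : ℕ → ℝ}
    (hb : Tendsto b atTop (𝓝 1)) (hx : ∀ N n, N ≤ n → G (x N) (x n) (x n) ≤ b N) :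
    GMCauchy G x := by
  intro ε hε
  have hb6 : Tendsto (fun N => b N ^ 6) atTop (𝓝 1) := by simpa using hb.pow 6
  obtain ⟨N, hN⟩ := (hb6.eventually (gt_mem_nhds hε)).exists
  refine ⟨N, fun n hn m hm l hl => ?_⟩
  have hpos (k : ℕ) : 0 ≤ G (x N) (x k) (x k) := (hG.pos ..).le
  calc G (x n) (x m) (x l)
      ≤ (G (x N) (x n) (x n) * G (x N) (x m) (x m) * G (x N) (x l) (x l)) ^ 2 :=
        hG.le_sq_of_center ..
    _ ≤ (b N * b N * b N) ^ 2 := by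
        have hbN : 0 ≤ b N := (hpos N).trans (hx N N le_rfl)
        gcongr
        exacts [mul_nonneg (mul_nonneg (hpos n) (hpos m)) (hpos l), hpos l, hpos m,
          hx N n hn, hx N m hm, hx N l hl]
    _ = b N ^ 6 := by ring
    _ < ε := hN

end IsMultGMetric

def IsGMContractionOn {Z : Type*} (G : Z → Z → Z → ℝ) (F : Z → Z) (s : Set Z) (η : ℝ) :
    Prop :=
  ∀ x ∈ s, ∀ y ∈ s, ∀ z ∈ s, G (F x) (F y) (F z) ≤ G x y z ^ η

section Picard

variable {Z : Type*} {G : Z → Z → Z → ℝ} {F : Z → Z} {x₀ : Z} {η γ : ℝ}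

theorem iterate_mem_gmBall (hG : IsMultGMetric G) (hη0 : 0 ≤ η) (hη1 : η < 1) (hγ : 0 < γ)
    (hstart : G x₀ (F x₀) (F x₀) ≤ γ ^ (1 - η)) {j : ℕ}
    (hsteps : ∀ i < j,
      G (F^[i] x₀) (F^[i + 1] x₀) (F^[i + 1] x₀) ≤ G x₀ (F x₀) (F x₀) ^ η ^ i) :
    F^[j] x₀ ∈ GMBall G x₀ γ :=
  calc G x₀ (F^[j] x₀) (F^[j] x₀) ≤ G x₀ (F x₀) (F x₀) ^ (η ^ 0 / (1 - η)) :=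
        hG.le_rpow_of_geometric_steps (x := fun i => F^[i] x₀) (hG.one_le ..) hη0 hη1
          j.zero_le fun i hi => hsteps i (mem_Ico.1 hi).2
    _ = G x₀ (F x₀) (F x₀) ^ (1 - η)⁻¹ := by rw [pow_zero, one_div]
    _ ≤ γ := (Real.rpow_inv_le_iff_of_pos (hG.pos ..).le hγ.le (by linarith)).2 hstart

theorem iterate_step_le (hG : IsMultGMetric G) (hη0 : 0 ≤ η) (hη1 : η < 1) (hγ : 0 < γ)
    (hcontr : IsGMContractionOn G F (GMBall G x₀ γ) η)
    (hstart : G x₀ (F x₀) (F x₀) ≤ γ ^ (1 - η)) (j : ℕ) :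
    G (F^[j] x₀) (F^[j + 1] x₀) (F^[j + 1] x₀) ≤ G x₀ (F x₀) (F x₀) ^ η ^ j := by
  induction j using Nat.strong_induction_on with
  | _ j ih =>
  have hball (k : ℕ) (hk : k ≤ j) : F^[k] x₀ ∈ GMBall G x₀ γ :=
    iterate_mem_gmBall hG hη0 hη1 hγ hstart fun i hi => ih i (by omega)
  rcases j with _ | k
  · simp
  · calc G (F^[k + 1] x₀) (F^[k + 1 + 1] x₀) (F^[k + 1 + 1] x₀)
        = G (F (F^[k] x₀)) (F (F^[k + 1] x₀)) (F (F^[k + 1] x₀)) := by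
          simp only [Function.iterate_succ_apply']
      _ ≤ G (F^[k] x₀) (F^[k + 1] x₀) (F^[k + 1] x₀) ^ η :=
          hcontr _ (hball k (by omega)) _ (hball _ le_rfl) _ (hball _ le_rfl)
      _ ≤ (G x₀ (F x₀) (F x₀) ^ η ^ k) ^ η :=
          Real.rpow_le_rpow (hG.pos ..).le (ih k (by omega)) hη0
      _ = G x₀ (F x₀) (F x₀) ^ η ^ (k + 1) := by
          rw [← Real.rpow_mul (hG.pos ..).le, pow_succ]

end Picard

theorem picard_sequence_cauchy_general {Z : Type*}
    (G : Z → Z → Z → ℝ) (hG : IsMultGMetric G)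
    (F : Z → Z) (x₀ : Z) (η γ : ℝ)
    (hη0 : 0 ≤ η) (hη1 : η < 1) (hγ : 0 < γ)
    (hcontr : ∀ x ∈ GMBall G x₀ γ, ∀ y ∈ GMBall G x₀ γ, ∀ z ∈ GMBall G x₀ γ,
      G (F x) (F y) (F z) ≤ (G x y z) ^ η)
    (hstart : G x₀ (F x₀) (F x₀) ≤ γ ^ (1 - η)) :
    GMCauchy G (fun j => F^[j] x₀) := by
  have hb : Tendsto (fun N : ℕ => G x₀ (F x₀) (F x₀) ^ (η ^ N / (1 - η))) atTop (𝓝 1) := by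
    have hexp := (tendsto_pow_atTop_nhds_zero_of_lt_one hη0 hη1).div_const (1 - η)
    simpa [Function.comp_def] using
      (Real.continuousAt_const_rpow (hG.pos ..).ne').tendsto.comp hexp
  exact hG.gmCauchy_of_tendsto hb fun N n hNn =>
    hG.le_rpow_of_geometric_steps (hG.one_le ..) hη0 hη1 hNn fun i _ =>
      iterate_step_le hG hη0 hη1 hγ hcontr hstart i

theorem picard_sequence_cauchy {Z : Type*} [Nonempty Z]
    (G : Z → Z → Z → ℝ) (hG : IsMultGMetric G)
    (F : Z → Z) (x₀ : Z) (η γ : ℝ)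
    (hη0 : 0 ≤ η) (hη1 : η < 1) (hγ : 0 < γ)
    (hcontr : ∀ x ∈ GMBall G x₀ γ, ∀ y ∈ GMBall G x₀ γ, ∀ z ∈ GMBall G x₀ γ,
      G (F x) (F y) (F z) ≤ (G x y z) ^ η)
    (hstart : G x₀ (F x₀) (F x₀) ≤ γ ^ (1 - η)) :
    GMCauchy G (fun j => F^[j] x₀) :=
  picard_sequence_cauchy_general G hG F x₀ η γ hη0 hη1 hγ hcontr hstart
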